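/- arXiv:2509.20933 — 2 statements merged into one kernel-verified Lean document; each statement's English description precedes it below -/
import Mathlib

section
/- Let (X, c) and (Y, d) be quantum Markov chains on ℂ^d. If states x : X and y : Y are AM-bisimilar, then they are kernel bisimilar. -/
/-! An AM-bisimulation `R` is a span `X ← R → Y` of homomorphisms of quantum Markov chains.
Glue `X` and `Y` along it (the pushout of sets) and push the kernels of `X` and `Y` forward to
the glued set `Z`. By functoriality of pushforward, both pushforwards at a glued pair equal the
pushforward of the kernel of `R` along the common composite `R → Z`, so they define one
quantum Markov chain on `Z` for which both inclusions are homomorphisms. -/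

open Matrix ComplexOrder

/-- An effect on ℂ^d: a positive semidefinite matrix below the identity. -/
def IsEffect {d : ℕ} (L : Matrix (Fin d) (Fin d) ℂ) : Prop :=
  L.PosSemidef ∧ (1 - L).PosSemidef

/-- A density operator on ℂ^d: a positive semidefinite matrix of trace one. -/
def IsDensity {d : ℕ} (ρ : Matrix (Fin d) (Fin d) ℂ) : Prop :=
  ρ.PosSemidef ∧ ρ.trace = 1

/-- Pushforward of a (finitely supported) weight function along `f`. -/
noncomputable def push {M : Type*} [AddCommMonoid M] {X Z : Type} (f : X → Z)
    (Δ : X → M) : Z → M :=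
  fun z => ∑ᶠ (x : X) (_ : f x = z), Δ x

/-- A quantum (sub)distribution on `X` with weights on ℂ^d. -/
def IsQDist {d : ℕ} {X : Type} (Δ : X → Matrix (Fin d) (Fin d) ℂ) : Prop :=
  (Function.support Δ).Finite ∧ (∀ x, (Δ x).PosSemidef) ∧ (1 - ∑ᶠ x, Δ x).PosSemidef

/-- A quantum Markov chain on ℂ^d. -/
def IsQMC {d : ℕ} {X : Type} (c : X → X → Matrix (Fin d) (Fin d) ℂ) : Prop :=
  ∀ x, IsQDist (c x)

/-- A homomorphism of quantum Markov chains. -/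
def IsQHom {d : ℕ} {X Z : Type} (c : X → X → Matrix (Fin d) (Fin d) ℂ)
    (e : Z → Z → Matrix (Fin d) (Fin d) ℂ) (f : X → Z) : Prop :=
  ∀ x, e (f x) = push f (c x)

/-- Kernel bisimilarity of states of two quantum Markov chains. -/
def QKernelBisim {d : ℕ} {X Y : Type} (c : X → X → Matrix (Fin d) (Fin d) ℂ)
    (dY : Y → Y → Matrix (Fin d) (Fin d) ℂ) (x : X) (y : Y) : Prop :=
  ∃ (Z : Type) (e : Z → Z → Matrix (Fin d) (Fin d) ℂ) (m₁ : X → Z) (m₂ : Y → Z),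
    IsQMC e ∧ IsQHom c e m₁ ∧ IsQHom dY e m₂ ∧ m₁ x = m₂ y

/-- `R ⊆ X × Y` is an AM-bisimulation between the quantum Markov chains
`(X, c)` and `(Y, d)` if there is a quantum Markov chain structure on `R`
making the two projections homomorphisms. -/
def IsQAMBisim {d : ℕ} {X Y : Type} (c : X → X → Matrix (Fin d) (Fin d) ℂ)
    (dY : Y → Y → Matrix (Fin d) (Fin d) ℂ) (R : Set (X × Y)) : Prop :=
  ∃ e : R → R → Matrix (Fin d) (Fin d) ℂ, IsQMC e ∧
    (∀ r : R, c r.1.1 = push (fun r' : R => r'.1.1) (e r)) ∧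
    (∀ r : R, dY r.1.2 = push (fun r' : R => r'.1.2) (e r))

/-- AM-bisimilarity of states of two quantum Markov chains. -/
def QAMBisimilar {d : ℕ} {X Y : Type} (c : X → X → Matrix (Fin d) (Fin d) ℂ)
    (dY : Y → Y → Matrix (Fin d) (Fin d) ℂ) (x : X) (y : Y) : Prop :=
  ∃ R : Set (X × Y), IsQAMBisim c dY R ∧ (x, y) ∈ R

open Function

section Push

variable {M : Type*} [AddCommMonoid M] {X Z W : Type}

lemma push_apply_eq_sum_filter [DecidableEq Z] (f : X → Z) {Δ : X → M} {s : Finset X}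
    (hs : support Δ ⊆ s) (z : Z) : push f Δ z = ∑ x ∈ s with f x = z, Δ x :=
  finsum_cond_eq_sum_of_cond_iff Δ fun hx => by simp [Finset.mem_coe.mp (hs hx)]

lemma support_push_subset (f : X → Z) (Δ : X → M) : support (push f Δ) ⊆ f '' support Δ := by
  intro z hz
  obtain ⟨x, hfx, hx⟩ := exists_ne_zero_of_finsum_mem_ne_zero hz
  exact ⟨x, hx, hfx⟩

lemma finsum_push (f : X → Z) {Δ : X → M} (hΔ : (support Δ).Finite) :
    ∑ᶠ z, push f Δ z = ∑ᶠ x, Δ x := by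
  classical
  simp_rw [push_apply_eq_sum_filter f hΔ.coe_toFinset.ge]
  exact (finsum_sum_filter f _ Δ).trans (finsum_eq_sum_of_support_subset Δ hΔ.coe_toFinset.ge).symm

lemma push_push (f : Z → W) (g : X → Z) {Δ : X → M} (hΔ : (support Δ).Finite) :
    push f (push g Δ) = push (f ∘ g) Δ := by
  classical
  set s := hΔ.toFinset
  have hs : support Δ ⊆ s := hΔ.coe_toFinset.ge
  have ht : support (push g Δ) ⊆ s.image g := by
    simpa using (support_push_subset g Δ).trans (Set.image_mono hs)
  funext w
  rw [push_apply_eq_sum_filter f ht, push_apply_eq_sum_filter (f ∘ g) hs]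
  simp_rw [push_apply_eq_sum_filter g hs]
  refine (Finset.sum_fiberwise_eq_sum_filter _ _ g Δ).trans ?_
  refine Finset.sum_congr (Finset.filter_congr fun x hx => ?_) fun _ _ => rfl
  simp [Finset.mem_image_of_mem g hx]

end Push

section SpanPushout

variable {R X Y : Type} (p₁ : R → X) (p₂ : R → Y)

def SpanPushout : Type :=
  Quot fun a b : X ⊕ Y => ∃ r, a = .inl (p₁ r) ∧ b = .inr (p₂ r)

namespace SpanPushout

def inl (x : X) : SpanPushout p₁ p₂ := Quot.mk _ (.inl x)

def inr (y : Y) : SpanPushout p₁ p₂ := Quot.mk _ (.inr y)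

lemma inl_comp_eq_inr_comp : inl p₁ p₂ ∘ p₁ = inr p₁ p₂ ∘ p₂ :=
  funext fun r => Quot.sound ⟨r, rfl, rfl⟩

def desc {T : Type*} (f : X → T) (g : Y → T) (h : f ∘ p₁ = g ∘ p₂) : SpanPushout p₁ p₂ → T :=
  Quot.lift (Sum.elim f g) (by rintro _ _ ⟨r, rfl, rfl⟩; exact congrFun h r)

end SpanPushout

end SpanPushout

section QuantumMarkovChain

variable {d : ℕ}

lemma IsQDist.push {X Z : Type} {Δ : X → Matrix (Fin d) (Fin d) ℂ} (hΔ : IsQDist Δ) (f : X → Z) :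
    IsQDist (push f Δ) := by
  classical
  obtain ⟨hfin, hpsd, hsum⟩ := hΔ
  refine ⟨(hfin.image f).subset (support_push_subset f Δ), fun z => ?_, ?_⟩
  · rw [push_apply_eq_sum_filter f hfin.coe_toFinset.ge]
    exact posSemidef_sum _ fun x _ => hpsd x
  · rwa [finsum_push f hfin]

lemma IsQHom.push_eq_push_comp {R X Z : Type} {e : R → R → Matrix (Fin d) (Fin d) ℂ}
    {c : X → X → Matrix (Fin d) (Fin d) ℂ} {p : R → X} (hp : IsQHom e c p) {r : R}
    (he : (support (e r)).Finite) (m : X → Z) : push m (c (p r)) = push (m ∘ p) (e r) := by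
  rw [hp r, push_push m p he]

open SpanPushout in
theorem QKernelBisim.of_qhom_span {R X Y : Type} {e : R → R → Matrix (Fin d) (Fin d) ℂ}
    {c : X → X → Matrix (Fin d) (Fin d) ℂ} {dY : Y → Y → Matrix (Fin d) (Fin d) ℂ}
    {p₁ : R → X} {p₂ : R → Y} (hc : IsQMC c) (hd : IsQMC dY) (he : ∀ r, (support (e r)).Finite)
    (h₁ : IsQHom e c p₁) (h₂ : IsQHom e dY p₂) (r : R) : QKernelBisim c dY (p₁ r) (p₂ r) := by
  have glued : (fun x => push (inl p₁ p₂) (c x)) ∘ p₁ = (fun y => push (inr p₁ p₂) (dY y)) ∘ p₂ :=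
    funext fun r' => by
      simp only [Function.comp_apply, h₁.push_eq_push_comp (he r'), h₂.push_eq_push_comp (he r'),
        inl_comp_eq_inr_comp]
  refine ⟨SpanPushout p₁ p₂, desc p₁ p₂ _ _ glued, inl p₁ p₂, inr p₁ p₂, Quot.ind ?_,
    fun _ => rfl, fun _ => rfl, congrFun (inl_comp_eq_inr_comp p₁ p₂) r⟩
  rintro (x | y)
  · exact (hc x).push _
  · exact (hd y).push _

end QuantumMarkovChain

/-- AM-bisimilar states of quantum Markov chains are kernel bisimilar. -/
theorem stmt11 (d : ℕ) {X Y : Type} (c : X → X → Matrix (Fin d) (Fin d) ℂ)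
    (dY : Y → Y → Matrix (Fin d) (Fin d) ℂ)
    (hc : IsQMC c) (hd : IsQMC dY) (x : X) (y : Y)
    (h : QAMBisimilar c dY x y) :
    QKernelBisim c dY x y := by
  obtain ⟨R, ⟨e, he, h₁, h₂⟩, hxy⟩ := h
  exact QKernelBisim.of_qhom_span hc hd (fun r => (he r).1) h₁ h₂ ⟨(x, y), hxy⟩
end

section
/- Consider the quantum Markov chain (X, c) on ℂ^2 with X = {x₁, x₂, x₃, x₄} and weights: c x₁ assigns to x₃ the matrix !![1, 0; 0, 0] and to x₄ the matrix !![0, 0; 0, 1] (and 0 elsewhere); c x₂ assigns to x₃ the matrix !![1/2, 1/2; 1/2, 1/2] and to x₄ the matrix !![1/2, -1/2; -1/2, 1/2] (and 0 elsewhere); c x₃ and c x₄ both assign the 2×2 identity matrix to x₃ (and 0 elsewhere). Then x₁ and x₂ are kernel bisimilar in (X, c), but x₁ and x₂ are not AM-bisimilar in (X, c). -/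
open Matrix ComplexOrder

section Aux

lemma push_eq_sum {M : Type*} [AddCommMonoid M] {X Z : Type} [Fintype X] [DecidableEq Z]
    (f : X → Z) (Δ : X → M) (z : Z) :
    push f Δ z = ∑ x, if f x = z then Δ x else 0 := by
  unfold push
  rw [finsum_eq_sum_of_fintype]
  exact Finset.sum_congr rfl fun x _ => finsum_eq_if

lemma push_comp {M : Type*} [AddCommMonoid M] {X Y Z : Type} [Fintype X] [Fintype Y]
    [DecidableEq Y] [DecidableEq Z] (f : X → Y) (g : Y → Z) (Δ : X → M) :
    push (g ∘ f) Δ = push g (push f Δ) := by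
  funext z
  rw [show push g (push f Δ) z = ∑ y, if g y = z then push f Δ y else 0 from push_eq_sum ..]
  rw [push_eq_sum]
  calc ∑ x, (if (g ∘ f) x = z then Δ x else 0)
      = ∑ x, ∑ y, if f x = y then (if g y = z then Δ x else 0) else 0 := by
        refine Finset.sum_congr rfl fun x _ => ?_
        rw [Finset.sum_ite_eq]
        simp
    _ = ∑ y, ∑ x, if f x = y then (if g y = z then Δ x else 0) else 0 := Finset.sum_comm
    _ = ∑ y, if g y = z then push f Δ y else 0 := by
        refine Finset.sum_congr rfl fun y _ => ?_
        rw [push_eq_sum]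
        split_ifs with h
        · exact Finset.sum_congr rfl fun x _ => by split_ifs <;> simp [h]
        · simp [h]

lemma psd4 {A B C D : Matrix (Fin 2) (Fin 2) ℂ}
    (hA : A.PosSemidef) (hB : B.PosSemidef) (hC : C.PosSemidef) (hD : D.PosSemidef)
    (v : Fin 2 → ℂ) (h : star v ⬝ᵥ (A + B + C + D) *ᵥ v = 0) :
    A *ᵥ v = 0 ∧ B *ᵥ v = 0 ∧ C *ᵥ v = 0 ∧ D *ᵥ v = 0 := by
  rw [add_mulVec, add_mulVec, add_mulVec, dotProduct_add, dotProduct_add, dotProduct_add] at h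
  have ha := hA.dotProduct_mulVec_nonneg v
  have hb := hB.dotProduct_mulVec_nonneg v
  have hc := hC.dotProduct_mulVec_nonneg v
  have hd := hD.dotProduct_mulVec_nonneg v
  obtain ⟨h3, hd0⟩ :=
    (add_eq_zero_iff_of_nonneg (add_nonneg (add_nonneg ha hb) hc) hd).mp h
  obtain ⟨h2, hc0⟩ := (add_eq_zero_iff_of_nonneg (add_nonneg ha hb) hc).mp h3
  obtain ⟨ha0, hb0⟩ := (add_eq_zero_iff_of_nonneg ha hb).mp h2
  exact ⟨(hA.dotProduct_mulVec_zero_iff v).mp ha0, (hB.dotProduct_mulVec_zero_iff v).mp hb0,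
    (hC.dotProduct_mulVec_zero_iff v).mp hc0, (hD.dotProduct_mulVec_zero_iff v).mp hd0⟩

end Aux

/-- The quantum Markov chain of the counterexample: `x₁, x₂, x₃, x₄` are
`0, 1, 2, 3 : Fin 4`. `c x₁` measures in the computational basis, `c x₂` in the
Hadamard basis, and `x₃`, `x₄` go to `x₃` with weight the identity. -/
noncomputable def c13 : Fin 4 → Fin 4 → Matrix (Fin 2) (Fin 2) ℂ := fun x x' =>
  if x = 0 ∧ x' = 2 then !![1, 0; 0, 0]
  else if x = 0 ∧ x' = 3 then !![0, 0; 0, 1]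
  else if x = 1 ∧ x' = 2 then !![1/2, 1/2; 1/2, 1/2]
  else if x = 1 ∧ x' = 3 then !![1/2, -1/2; -1/2, 1/2]
  else if x = 2 ∧ x' = 2 then 1
  else if x = 3 ∧ x' = 2 then 1
  else 0

/-- In the chain `c13`, the states `x₁ = 0` and `x₂ = 1` are kernel bisimilar
but not AM-bisimilar. -/
theorem stmt13 :
    QKernelBisim c13 c13 (0 : Fin 4) (1 : Fin 4) ∧
    ¬ QAMBisimilar c13 c13 (0 : Fin 4) (1 : Fin 4) := by
  constructor
  · -- kernel bisimilarity: collapse 0,1 to a state and 2,3 to another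
    refine ⟨Fin 2, fun _ z => if z = 1 then 1 else 0, ![0, 0, 1, 1], ![0, 0, 1, 1],
      ?_, ?_, ?_, rfl⟩
    · intro x
      refine ⟨Set.toFinite _, fun z => ?_, ?_⟩
      · dsimp only
        split_ifs
        exacts [Matrix.PosSemidef.one, Matrix.PosSemidef.zero]
      · rw [finsum_eq_sum_of_fintype, Fin.sum_univ_two]
        norm_num
        exact Matrix.PosSemidef.zero
    all_goals
      have m1 : (!![1,0;0,0] + !![0,0;0,1] : Matrix (Fin 2) (Fin 2) ℂ) = 1 := by
        ext i j; fin_cases i <;> fin_cases j <;> simp [Matrix.one_apply]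
      have m2 : (!![1/2,1/2;1/2,1/2] + !![1/2,-1/2;-1/2,1/2] :
          Matrix (Fin 2) (Fin 2) ℂ) = 1 := by
        ext i j; fin_cases i <;> fin_cases j <;> norm_num [Matrix.one_apply]
      intro x
      funext z
      rw [push_eq_sum]
      fin_cases x <;> fin_cases z <;> simp [c13, Fin.sum_univ_four, m1, m2] <;>
        · ext i j
          fin_cases i <;> fin_cases j <;> norm_num [Matrix.one_apply]
  · rintro ⟨R, ⟨e, hQMC, hp1, hp2⟩, hmem⟩
    haveI : Fintype R := (Set.toFinite R).fintype
    set r₀ : R := ⟨((0 : Fin 4), (1 : Fin 4)), hmem⟩ with hr₀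
    have hE : ∀ r', ((e r₀) r').PosSemidef := (hQMC r₀).2.1
    set F : Fin 4 × Fin 4 → Matrix (Fin 2) (Fin 2) ℂ :=
      push (fun r : R => (r : Fin 4 × Fin 4)) (e r₀) with hFdef
    have hFpsd : ∀ p, (F p).PosSemidef := by
      intro p
      rw [hFdef, push_eq_sum]
      refine Finset.sum_induction _ _ (fun a b ha hb => ha.add hb) Matrix.PosSemidef.zero ?_
      intro r' _
      split_ifs
      exacts [hE r', Matrix.PosSemidef.zero]
    have h1 : c13 0 = push Prod.fst F := by
      have h := hp1 r₀
      rw [show (fun r' : R => r'.1.1) = Prod.fst ∘ (fun r : R => (r : Fin 4 × Fin 4)) from rfl,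
        push_comp] at h
      exact h
    have h2 : c13 1 = push Prod.snd F := by
      have h := hp2 r₀
      rw [show (fun r' : R => r'.1.2) = Prod.snd ∘ (fun r : R => (r : Fin 4 × Fin 4)) from rfl,
        push_comp] at h
      exact h
    have keyrow : ∀ z : Fin 4,
        push Prod.fst F z = F (z, 0) + F (z, 1) + F (z, 2) + F (z, 3) := by
      intro z
      rw [push_eq_sum, Fintype.sum_prod_type]
      calc ∑ x, ∑ y, (if (x, y).1 = z then F (x, y) else 0)
          = ∑ x, (if x = z then F (x, 0) + F (x, 1) + F (x, 2) + F (x, 3) else 0) := by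
            refine Finset.sum_congr rfl fun x _ => ?_
            rw [Fin.sum_univ_four]
            split_ifs <;> simp
        _ = F (z, 0) + F (z, 1) + F (z, 2) + F (z, 3) := by
            rw [Finset.sum_ite_eq' Finset.univ z
              (fun x => F (x, 0) + F (x, 1) + F (x, 2) + F (x, 3))]
            simp
    have keycol : ∀ z : Fin 4,
        push Prod.snd F z = F (0, z) + F (1, z) + F (2, z) + F (3, z) := by
      intro z
      rw [push_eq_sum, Fintype.sum_prod_type]
      calc ∑ x, ∑ y, (if (x, y).2 = z then F (x, y) else 0)
          = ∑ x : Fin 4, F (x, z) := by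
            refine Finset.sum_congr rfl fun x _ => ?_
            rw [Finset.sum_ite_eq' Finset.univ z (fun y => F (x, y))]
            simp
        _ = F (0, z) + F (1, z) + F (2, z) + F (3, z) := Fin.sum_univ_four _
    have row2 : (!![1, 0; 0, 0] : Matrix (Fin 2) (Fin 2) ℂ)
        = F (2, 0) + F (2, 1) + F (2, 2) + F (2, 3) :=
      (congrFun h1 2).trans (keyrow 2)
    have col0 : (0 : Matrix (Fin 2) (Fin 2) ℂ)
        = F (0, 0) + F (1, 0) + F (2, 0) + F (3, 0) :=
      (congrFun h2 0).trans (keycol 0)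
    have col1 : (0 : Matrix (Fin 2) (Fin 2) ℂ)
        = F (0, 1) + F (1, 1) + F (2, 1) + F (3, 1) :=
      (congrFun h2 1).trans (keycol 1)
    have col2 : (!![1/2, 1/2; 1/2, 1/2] : Matrix (Fin 2) (Fin 2) ℂ)
        = F (0, 2) + F (1, 2) + F (2, 2) + F (3, 2) :=
      (congrFun h2 2).trans (keycol 2)
    have col3 : (!![1/2, -1/2; -1/2, 1/2] : Matrix (Fin 2) (Fin 2) ℂ)
        = F (0, 3) + F (1, 3) + F (2, 3) + F (3, 3) :=
      (congrFun h2 3).trans (keycol 3)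
    -- extract kernel facts
    have z0 := psd4 (hFpsd (0, 0)) (hFpsd (1, 0)) (hFpsd (2, 0)) (hFpsd (3, 0)) ![1, 0]
      (by rw [← col0]; simp)
    have z1 := psd4 (hFpsd (0, 1)) (hFpsd (1, 1)) (hFpsd (2, 1)) (hFpsd (3, 1)) ![1, 0]
      (by rw [← col1]; simp)
    have zr := psd4 (hFpsd (2, 0)) (hFpsd (2, 1)) (hFpsd (2, 2)) (hFpsd (2, 3)) ![0, 1]
      (by rw [← row2]; simp [dotProduct, mulVec, Fin.sum_univ_two])
    have z2 := psd4 (hFpsd (0, 2)) (hFpsd (1, 2)) (hFpsd (2, 2)) (hFpsd (3, 2)) ![1, -1]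
      (by rw [← col2]; simp [dotProduct, mulVec, Fin.sum_univ_two])
    have z3 := psd4 (hFpsd (0, 3)) (hFpsd (1, 3)) (hFpsd (2, 3)) (hFpsd (3, 3)) ![1, 1]
      (by rw [← col3]; simp [dotProduct, mulVec, Fin.sum_univ_two]; try ring)
    have hA10 : F (2, 2) *ᵥ ![1, 0] = 0 := by
      have hv : (![1, 0] : Fin 2 → ℂ) = ![1, -1] + ![0, 1] := by
        funext i; fin_cases i <;> norm_num
      rw [hv, mulVec_add, z2.2.2.1, zr.2.2.1, add_zero]
    have hB10 : F (2, 3) *ᵥ ![1, 0] = 0 := by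
      have hv : (![1, 0] : Fin 2 → ℂ) = ![1, 1] - ![0, 1] := by
        funext i; fin_cases i <;> norm_num
      rw [hv, mulVec_sub, z3.2.2.1, zr.2.2.2, sub_zero]
    have final := congrArg (fun M => M *ᵥ ![1, 0]) row2
    simp only [add_mulVec, z0.2.2.1, z1.2.2.1, hA10, hB10, add_zero] at final
    have contra := congrFun final 0
    simp [mulVec, dotProduct, Fin.sum_univ_two] at contra
end
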